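/- There exists a constant C > 0 such that for every function û of class C⁴ on a neighborhood of K̂ = [−1,1]² and every v̂ in the reference shape space P̂ = P₂(K̂) + span{ξ₁³, ξ₂³}, the functional B₂ satisfies |B₂(û, v̂)| ≤ C |û|_{H⁴(K̂)} |v̂|_{H²(K̂)}. -/

import Mathlib

open MeasureTheory

/-- Partial derivative in the first variable of a curried function on `ℝ²`. -/
noncomputable def pdx (f : ℝ → ℝ → ℝ) : ℝ → ℝ → ℝ := fun x y => deriv (fun t => f t y) x

/-- Partial derivative in the second variable of a curried function on `ℝ²`. -/
noncomputable def pdy (f : ℝ → ℝ → ℝ) : ℝ → ℝ → ℝ := fun x y => deriv (fun t => f x t) y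

/-- Membership in the shape space `P(K) = P₂(K) + span{x₁³, x₂³}` of the two-dimensional
rectangular Morley element. -/
def MorleyShape2 (w : ℝ → ℝ → ℝ) : Prop :=
  ∃ c0 c1 c2 c3 c4 c5 c6 c7 : ℝ, ∀ x y : ℝ,
    w x y = c0 + c1 * x + c2 * y + c3 * x ^ 2 + c4 * (x * y) + c5 * y ^ 2
      + c6 * x ^ 3 + c7 * y ^ 3

/-- The `H²` seminorm of `v` on the rectangle `[a,b] × [c,d]`, each ordering of mixed
partial derivatives counted. -/
noncomputable def semiH2R (v : ℝ → ℝ → ℝ) (a b c d : ℝ) : ℝ :=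
  Real.sqrt (∫ x in a..b, ∫ y in c..d,
    (pdx (pdx v) x y) ^ 2 + (pdx (pdy v) x y) ^ 2 + (pdy (pdx v) x y) ^ 2
      + (pdy (pdy v) x y) ^ 2)

/-- The `H⁴` seminorm of `u` on the rectangle `[a,b] × [c,d]`, each ordering of mixed
partial derivatives counted (hence the binomial coefficients). -/
noncomputable def semiH4R (u : ℝ → ℝ → ℝ) (a b c d : ℝ) : ℝ :=
  Real.sqrt (∫ x in a..b, ∫ y in c..d,
    (pdx (pdx (pdx (pdx u))) x y) ^ 2 + 4 * (pdx (pdx (pdx (pdy u))) x y) ^ 2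
      + 6 * (pdx (pdx (pdy (pdy u))) x y) ^ 2 + 4 * (pdx (pdy (pdy (pdy u))) x y) ^ 2
      + (pdy (pdy (pdy (pdy u))) x y) ^ 2)

/-- `u` is of class `C⁴` on a neighborhood of the rectangle `[a,b] × [c,d]`. -/
def C4Near (u : ℝ → ℝ → ℝ) (a b c d : ℝ) : Prop :=
  ∃ U : Set (ℝ × ℝ), IsOpen U ∧ Set.Icc a b ×ˢ Set.Icc c d ⊆ U ∧
    ContDiffOn ℝ 4 (fun p : ℝ × ℝ => u p.1 p.2) U

/-- The functional `B₂` on the reference square `[-1,1]²`. -/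
noncomputable def B2 (u v : ℝ → ℝ → ℝ) : ℝ :=
  (1 / 3) * (∫ x in (-1:ℝ)..1, ∫ y in (-1:ℝ)..1,
      pdx (pdy (pdy u)) x y * pdx (pdx (pdx v)) x y)
    + (1 / 3) * (∫ x in (-1:ℝ)..1, ∫ y in (-1:ℝ)..1,
      pdx (pdx (pdy u)) x y * pdy (pdy (pdy v)) x y)
    - (1 / 6) * (∫ x in (-1:ℝ)..1, ∫ y in (-1:ℝ)..1,
      (∫ t in (-1:ℝ)..1, pdx (pdy (pdy u)) 1 t) * pdx (pdx (pdx v)) x y)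
    - (1 / 6) * (∫ x in (-1:ℝ)..1, ∫ y in (-1:ℝ)..1,
      (∫ t in (-1:ℝ)..1, pdx (pdx (pdy u)) t (-1)) * pdy (pdy (pdy v)) x y)

/-!
For `v ∈ P̂` the third derivatives `α = ∂₁³v` and `β = ∂₂³v` are constants, so
`B₂(u, v) = α/3 · (∫_K̂ A - 2 ∫ A(1, ·)) + β/3 · (∫_K̂ D - 2 ∫ D(·, -1))` with
`A = ∂₁∂₂²u` and `D = ∂₁²∂₂u`. Each bracket is the integral over `K̂` of `A(ξ) - A(1, ξ₂)`
(resp. `D(ξ) - D(ξ₁, -1)`), which the fundamental theorem of calculus bounds by an integral of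
`|∂₁²∂₂²u|` along a segment (for `D` after commuting the partial derivatives). Cauchy–Schwarz
then bounds both brackets by `4 ‖∂₁²∂₂²u‖_{L²} ≤ 4 |u|_{H⁴}`, while `|α|, |β| ≤ |v|_{H²}`.
-/

open Function Set Filter Topology

section PartialDerivatives

variable {f g : ℝ → ℝ → ℝ} {U : Set (ℝ × ℝ)} {x y : ℝ}

theorem pdx_congr_of_eventuallyEq (h : uncurry f =ᶠ[𝓝 (x, y)] uncurry g) :
    pdx f x y = pdx g x y :=
  (h.comp_tendsto ((continuous_id.prodMk continuous_const).tendsto' x (x, y) rfl)).deriv_eq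

theorem pdy_congr_of_eventuallyEq (h : uncurry f =ᶠ[𝓝 (x, y)] uncurry g) :
    pdy f x y = pdy g x y :=
  (h.comp_tendsto ((continuous_const.prodMk continuous_id).tendsto' y (x, y) rfl)).deriv_eq

theorem hasDerivAt_pdx (h : DifferentiableAt ℝ (uncurry f) (x, y)) :
    HasDerivAt (fun t => f t y) (pdx f x y) x :=
  (h.comp (f := fun t => (t, y)) x
    (differentiableAt_id.prodMk (differentiableAt_const y))).hasDerivAt

theorem hasDerivAt_pdy (h : DifferentiableAt ℝ (uncurry f) (x, y)) :
    HasDerivAt (f x) (pdy f x y) y :=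
  (h.comp (f := fun t => (x, t)) y
    ((differentiableAt_const x).prodMk differentiableAt_id)).hasDerivAt

theorem pdx_eq_fderiv (h : DifferentiableAt ℝ (uncurry f) (x, y)) :
    pdx f x y = fderiv ℝ (uncurry f) (x, y) (1, 0) :=
  (hasDerivAt_pdx h).unique <| HasFDerivAt.comp_hasDerivAt (f := fun t => (t, y)) x
    h.hasFDerivAt ((hasDerivAt_id x).prodMk (hasDerivAt_const x y))

theorem pdy_eq_fderiv (h : DifferentiableAt ℝ (uncurry f) (x, y)) :
    pdy f x y = fderiv ℝ (uncurry f) (x, y) (0, 1) :=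
  (hasDerivAt_pdy h).unique <| HasFDerivAt.comp_hasDerivAt (f := fun t => (x, t)) y
    h.hasFDerivAt ((hasDerivAt_const y x).prodMk (hasDerivAt_id y))

theorem ContDiffOn.differentiableAt_of_isOpen {E F : Type*} [NormedAddCommGroup E]
    [NormedSpace ℝ E] [NormedAddCommGroup F] [NormedSpace ℝ F] {n : WithTop ℕ∞} {G : E → F}
    {U : Set E} (hG : ContDiffOn ℝ n G U) (hU : IsOpen U) (hn : n ≠ 0) {p : E} (hp : p ∈ U) :
    DifferentiableAt ℝ G p :=
  (hG.differentiableOn hn p hp).differentiableAt (hU.mem_nhds hp)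

theorem ContDiffOn.uncurry_pdx {n : ℕ} (hf : ContDiffOn ℝ (n + 1 : ℕ) (uncurry f) U)
    (hU : IsOpen U) : ContDiffOn ℝ n (uncurry (pdx f)) U := by
  refine ((ContinuousLinearMap.apply ℝ ℝ ((1 : ℝ), (0 : ℝ))).contDiff.comp_contDiffOn
    (hf.fderiv_of_isOpen hU (by norm_cast))).congr fun p hp => ?_
  exact pdx_eq_fderiv (hf.differentiableAt_of_isOpen hU (by norm_cast) hp)

theorem ContDiffOn.uncurry_pdy {n : ℕ} (hf : ContDiffOn ℝ (n + 1 : ℕ) (uncurry f) U)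
    (hU : IsOpen U) : ContDiffOn ℝ n (uncurry (pdy f)) U := by
  refine ((ContinuousLinearMap.apply ℝ ℝ ((0 : ℝ), (1 : ℝ))).contDiff.comp_contDiffOn
    (hf.fderiv_of_isOpen hU (by norm_cast))).congr fun p hp => ?_
  exact pdy_eq_fderiv (hf.differentiableAt_of_isOpen hU (by norm_cast) hp)

theorem pdx_pdy_eq_fderiv_fderiv (hf : ContDiffOn ℝ 2 (uncurry f) U) (hU : IsOpen U)
    (hp : (x, y) ∈ U) :
    pdx (pdy f) x y = fderiv ℝ (fderiv ℝ (uncurry f)) (x, y) (1, 0) (0, 1) := by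
  have hf' : DifferentiableAt ℝ (fderiv ℝ (uncurry f)) (x, y) :=
    (hf.fderiv_of_isOpen (m := 1) hU (by norm_num)).differentiableAt_of_isOpen hU one_ne_zero hp
  have hpdy : uncurry (pdy f) =ᶠ[𝓝 (x, y)] fun q => fderiv ℝ (uncurry f) q (0, 1) := by
    filter_upwards [hU.mem_nhds hp] with q hq
    exact pdy_eq_fderiv (hf.differentiableAt_of_isOpen hU two_ne_zero hq)
  rw [pdx_congr_of_eventuallyEq (g := fun a b => fderiv ℝ (uncurry f) (a, b) (0, 1)) hpdy,
    pdx_eq_fderiv (hf'.clm_apply (differentiableAt_const _))]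
  change fderiv ℝ (fun q => fderiv ℝ (uncurry f) q (0, 1)) (x, y) (1, 0) = _
  rw [fderiv_clm_apply hf' (differentiableAt_const _)]
  simp only [fderiv_fun_const, Pi.zero_apply, ContinuousLinearMap.comp_zero, zero_add,
    ContinuousLinearMap.flip_apply]

theorem pdy_pdx_eq_fderiv_fderiv (hf : ContDiffOn ℝ 2 (uncurry f) U) (hU : IsOpen U)
    (hp : (x, y) ∈ U) :
    pdy (pdx f) x y = fderiv ℝ (fderiv ℝ (uncurry f)) (x, y) (0, 1) (1, 0) := by
  have hf' : DifferentiableAt ℝ (fderiv ℝ (uncurry f)) (x, y) :=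
    (hf.fderiv_of_isOpen (m := 1) hU (by norm_num)).differentiableAt_of_isOpen hU one_ne_zero hp
  have hpdx : uncurry (pdx f) =ᶠ[𝓝 (x, y)] fun q => fderiv ℝ (uncurry f) q (1, 0) := by
    filter_upwards [hU.mem_nhds hp] with q hq
    exact pdx_eq_fderiv (hf.differentiableAt_of_isOpen hU two_ne_zero hq)
  rw [pdy_congr_of_eventuallyEq (g := fun a b => fderiv ℝ (uncurry f) (a, b) (1, 0)) hpdx,
    pdy_eq_fderiv (hf'.clm_apply (differentiableAt_const _))]
  change fderiv ℝ (fun q => fderiv ℝ (uncurry f) q (1, 0)) (x, y) (0, 1) = _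
  rw [fderiv_clm_apply hf' (differentiableAt_const _)]
  simp only [fderiv_fun_const, Pi.zero_apply, ContinuousLinearMap.comp_zero, zero_add,
    ContinuousLinearMap.flip_apply]

theorem pdx_pdy_eq_pdy_pdx (hf : ContDiffOn ℝ 2 (uncurry f) U) (hU : IsOpen U)
    (hp : (x, y) ∈ U) : pdx (pdy f) x y = pdy (pdx f) x y := by
  rw [pdx_pdy_eq_fderiv_fderiv hf hU hp, pdy_pdx_eq_fderiv_fderiv hf hU hp,
    ((hf.contDiffAt (hU.mem_nhds hp)).isSymmSndFDerivAt (by simp)) (1, 0) (0, 1)]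

end PartialDerivatives

section Integrals

variable {E : Type*} [NormedAddCommGroup E] [NormedSpace ℝ E] {a b c d : ℝ}

theorem continuousOn_intervalIntegral_of_continuousOn_prod {f : ℝ → ℝ → E}
    (hab : a ≤ b) (hcd : c ≤ d) (hf : ContinuousOn (uncurry f) (Icc a b ×ˢ Icc c d)) :
    ContinuousOn (fun x => ∫ y in c..d, f x y) (Icc a b) := by
  -- clamping both variables to the rectangle extends `f` continuously to the whole plane
  set F : ℝ → ℝ → E := fun x y => f (projIcc a b hab x) (projIcc c d hcd y)
  have hF : Continuous (uncurry F) :=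
    hf.comp_continuous
      (f := fun p : ℝ × ℝ => ((projIcc a b hab p.1 : ℝ), (projIcc c d hcd p.2 : ℝ))) (by fun_prop)
      fun p => ⟨(projIcc a b hab p.1).2, (projIcc c d hcd p.2).2⟩
  refine (intervalIntegral.continuous_parametric_intervalIntegral_of_continuous' hF c d
    ).continuousOn.congr fun x hx => intervalIntegral.integral_congr fun y hy => ?_
  rw [uIcc_of_le hcd] at hy
  simp only [F, projIcc_of_mem _ hx, projIcc_of_mem _ hy]

theorem intervalIntegral_intervalIntegral_eq_setIntegral_prod {f : ℝ → ℝ → E}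
    (hab : a ≤ b) (hcd : c ≤ d) (hf : ContinuousOn (uncurry f) (Icc a b ×ˢ Icc c d)) :
    ∫ x in a..b, ∫ y in c..d, f x y = ∫ p in Icc a b ×ˢ Icc c d, uncurry f p := by
  rw [Measure.volume_eq_prod,
    setIntegral_prod _ (hf.integrableOn_compact (isCompact_Icc.prod isCompact_Icc))]
  simp only [intervalIntegral.integral_of_le hab, intervalIntegral.integral_of_le hcd,
    integral_Icc_eq_integral_Ioc, uncurry_apply_pair]

theorem intervalIntegral_intervalIntegral_swap_of_continuousOn {f : ℝ → ℝ → E}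
    (hab : a ≤ b) (hcd : c ≤ d) (hf : ContinuousOn (uncurry f) (Icc a b ×ˢ Icc c d)) :
    ∫ x in a..b, ∫ y in c..d, f x y = ∫ y in c..d, ∫ x in a..b, f x y := by
  refine intervalIntegral_intervalIntegral_swap
    ((hf.integrableOn_compact (isCompact_Icc.prod isCompact_Icc)).mono_set ?_)
  rw [uIoc_of_le hab, uIoc_of_le hcd]
  exact prod_mono Ioc_subset_Icc_self Ioc_subset_Icc_self

theorem integral_abs_le_sqrt_measureReal_mul_sqrt_integral_sq {α : Type*} [MeasurableSpace α]
    {μ : Measure α} [IsFiniteMeasure μ] {f : α → ℝ} (hf : MemLp f 2 μ) :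
    ∫ x, |f x| ∂μ ≤ √(μ.real univ) * √(∫ x, f x ^ 2 ∂μ) := by
  have := integral_mul_le_Lp_mul_Lq_of_nonneg (μ := μ) Real.HolderConjugate.two_two
    (f := fun x => |f x|) (g := fun _ => 1) (ae_of_all _ fun x => abs_nonneg _)
    (ae_of_all _ fun _ => zero_le_one) (by rw [ENNReal.ofReal_ofNat]; exact hf.abs)
    (by simpa using memLp_const 1)
  simpa [Real.sqrt_eq_rpow, mul_comm] using this

theorem intervalIntegral_intervalIntegral_abs_le_sqrt {q : ℝ → ℝ → ℝ} (hab : a ≤ b) (hcd : c ≤ d)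
    (hq : ContinuousOn (uncurry q) (Icc a b ×ˢ Icc c d)) :
    ∫ x in a..b, ∫ y in c..d, |q x y|
      ≤ √((b - a) * (d - c)) * √(∫ x in a..b, ∫ y in c..d, q x y ^ 2) := by
  have hR : IsCompact (Icc a b ×ˢ Icc c d) := isCompact_Icc.prod isCompact_Icc
  have hq2 : MemLp (uncurry q) 2 (volume.restrict (Icc a b ×ˢ Icc c d)) :=
    (memLp_two_iff_integrable_sq (hq.aestronglyMeasurable hR.measurableSet)).2
      ((hq.pow 2).integrableOn_compact hR)
  have habs : ContinuousOn (uncurry fun x y => |q x y|) (Icc a b ×ˢ Icc c d) := hq.abs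
  have hsq : ContinuousOn (uncurry fun x y => q x y ^ 2) (Icc a b ×ˢ Icc c d) := hq.pow 2
  rw [intervalIntegral_intervalIntegral_eq_setIntegral_prod hab hcd habs,
    intervalIntegral_intervalIntegral_eq_setIntegral_prod hab hcd hsq]
  have : IsFiniteMeasure (volume.restrict (Icc a b ×ˢ Icc c d)) :=
    isFiniteMeasure_restrict.2 hR.measure_lt_top.ne
  have hvol : (volume.restrict (Icc a b ×ˢ Icc c d)).real univ = (b - a) * (d - c) := by
    rw [Measure.real, Measure.restrict_apply_univ, Measure.volume_eq_prod, Measure.prod_prod,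
      Real.volume_Icc, Real.volume_Icc, ENNReal.toReal_mul,
      ENNReal.toReal_ofReal (sub_nonneg.2 hab), ENNReal.toReal_ofReal (sub_nonneg.2 hcd)]
  rw [← hvol]
  exact integral_abs_le_sqrt_measureReal_mul_sqrt_integral_sq hq2


theorem abs_sub_le_integral_abs_deriv {f f' : ℝ → ℝ} (hf : ∀ t ∈ Icc a b, HasDerivAt f (f' t) t)
    (hf' : IntervalIntegrable f' volume a b) {s t : ℝ} (hs : s ∈ Icc a b) (ht : t ∈ Icc a b) :
    |f t - f s| ≤ ∫ x in a..b, |f' x| := by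
  have hab : a ≤ b := hs.1.trans hs.2
  have hst : uIcc s t ⊆ uIcc a b := by
    rw [uIcc_of_le hab]
    exact uIcc_subset_Icc hs ht
  rw [← intervalIntegral.integral_eq_sub_of_hasDerivAt (fun x hx => hf x (uIcc_of_le hab ▸ hst hx))
    (hf'.mono_set hst)]
  calc |∫ x in s..t, f' x| ≤ |(∫ x in s..t, |f' x|)| :=
        intervalIntegral.norm_integral_le_abs_integral_norm (f := f')
    _ ≤ |(∫ x in a..b, |f' x|)| :=
        intervalIntegral.abs_integral_mono_interval (uIoc_subset_uIoc_of_uIcc_subset_uIcc hst)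
          (ae_of_all _ fun x => abs_nonneg _) hf'.abs
    _ = ∫ x in a..b, |f' x| :=
        abs_of_nonneg (intervalIntegral.integral_nonneg hab fun x _ => abs_nonneg _)

theorem abs_integral_sub_mul_le {f f' : ℝ → ℝ} (hab : a ≤ b)
    (hf : ∀ t ∈ Icc a b, HasDerivAt f (f' t) t) (hf' : IntervalIntegrable f' volume a b) {e : ℝ}
    (he : e ∈ Icc a b) :
    |(∫ x in a..b, f x) - (b - a) * f e| ≤ (b - a) * ∫ x in a..b, |f' x| := by
  have hcont : ContinuousOn f (Icc a b) := fun t ht => (hf t ht).continuousAt.continuousWithinAt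
  have hsub : (∫ x in a..b, f x) - (b - a) * f e = ∫ x in a..b, (f x - f e) := by
    rw [intervalIntegral.integral_sub (hcont.intervalIntegrable_of_Icc hab)
      intervalIntegrable_const, intervalIntegral.integral_const, smul_eq_mul]
  rw [hsub, mul_comm, ← abs_of_nonneg (sub_nonneg.2 hab)]
  refine intervalIntegral.norm_integral_le_of_norm_le_const (f := fun x => f x - f e)
    fun x hx => ?_
  rw [uIoc_of_le hab] at hx
  exact abs_sub_le_integral_abs_deriv hf hf' he (Ioc_subset_Icc_self hx)

theorem abs_intervalIntegral_intervalIntegral_sub_le {g q : ℝ → ℝ → ℝ} (hab : a ≤ b) (hcd : c ≤ d)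
    (hg : ContinuousOn (uncurry g) (Icc a b ×ˢ Icc c d))
    (hq : ContinuousOn (uncurry q) (Icc a b ×ˢ Icc c d))
    (hderiv : ∀ x ∈ Icc a b, ∀ y ∈ Icc c d, HasDerivAt (g x) (q x y) y) {e : ℝ}
    (he : e ∈ Icc c d) :
    |(∫ x in a..b, ∫ y in c..d, g x y) - (d - c) * ∫ x in a..b, g x e|
      ≤ (d - c) * ∫ x in a..b, ∫ y in c..d, |q x y| := by
  have hqabs : ContinuousOn (uncurry fun x y => |q x y|) (Icc a b ×ˢ Icc c d) := hq.abs
  have hge : ContinuousOn (fun x => g x e) (Icc a b) :=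
    hg.comp (f := fun x => (x, e)) (by fun_prop) fun x hx => ⟨hx, he⟩
  rw [← intervalIntegral.integral_const_mul, ← intervalIntegral.integral_const_mul,
    ← intervalIntegral.integral_sub
      ((continuousOn_intervalIntegral_of_continuousOn_prod hab hcd hg).intervalIntegrable_of_Icc
        hab)
      ((hge.intervalIntegrable_of_Icc hab).const_mul _)]
  refine intervalIntegral.norm_integral_le_of_norm_le
    (f := fun x => (∫ y in c..d, g x y) - (d - c) * g x e) hab (ae_of_all _ fun x hx => ?_)
    (((continuousOn_intervalIntegral_of_continuousOn_prod hab hcd hqabs).intervalIntegrable_of_Icc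
      hab).const_mul _)
  have hx' : x ∈ Icc a b := Ioc_subset_Icc_self hx
  have hqx : ContinuousOn (q x) (Icc c d) :=
    hq.comp (f := fun y => (x, y)) (by fun_prop) fun y hy => ⟨hx', hy⟩
  exact abs_integral_sub_mul_le hcd (hderiv x hx') (hqx.intervalIntegrable_of_Icc hcd) he

theorem intervalIntegral_intervalIntegral_mono {f g : ℝ → ℝ → ℝ} (hab : a ≤ b) (hcd : c ≤ d)
    (hf : ContinuousOn (uncurry f) (Icc a b ×ˢ Icc c d))
    (hg : ContinuousOn (uncurry g) (Icc a b ×ˢ Icc c d))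
    (hfg : ∀ x ∈ Icc a b, ∀ y ∈ Icc c d, f x y ≤ g x y) :
    ∫ x in a..b, ∫ y in c..d, f x y ≤ ∫ x in a..b, ∫ y in c..d, g x y := by
  have hR : IsCompact (Icc a b ×ˢ Icc c d) := isCompact_Icc.prod isCompact_Icc
  rw [intervalIntegral_intervalIntegral_eq_setIntegral_prod hab hcd hf,
    intervalIntegral_intervalIntegral_eq_setIntegral_prod hab hcd hg]
  exact setIntegral_mono_on (hf.integrableOn_compact hR) (hg.integrableOn_compact hR)
    hR.measurableSet fun p hp => hfg p.1 hp.1 p.2 hp.2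

end Integrals

theorem ContinuousOn.uncurry_flip {α β γ : Type*} [TopologicalSpace α] [TopologicalSpace β]
    [TopologicalSpace γ] {f : α → β → γ} {s : Set α} {t : Set β}
    (hf : ContinuousOn (uncurry f) (s ×ˢ t)) : ContinuousOn (uncurry (flip f)) (t ×ˢ s) :=
  hf.comp continuous_swap.continuousOn fun _ hp => ⟨hp.2, hp.1⟩

section FourthOrderPartials

variable {u : ℝ → ℝ → ℝ} {a b c d : ℝ}

theorem pdy_pdx_pdx_pdy_eq {U : Set (ℝ × ℝ)} {x y : ℝ} (hu : ContDiffOn ℝ 4 (uncurry u) U)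
    (hU : IsOpen U) (hp : (x, y) ∈ U) :
    pdy (pdx (pdx (pdy u))) x y = pdx (pdx (pdy (pdy u))) x y := by
  rw [← pdx_pdy_eq_pdy_pdx ((hu.uncurry_pdy hU).uncurry_pdx hU) hU hp]
  refine pdx_congr_of_eventuallyEq ?_
  filter_upwards [hU.mem_nhds hp] with q hq
  exact (pdx_pdy_eq_pdy_pdx ((hu.uncurry_pdy hU).of_le (by norm_num)) hU hq).symm

theorem abs_integral_pdx_pdy_pdy_sub_le (hu : C4Near u a b c d) (hab : a ≤ b) (hcd : c ≤ d) :
    |(∫ x in a..b, ∫ y in c..d, pdx (pdy (pdy u)) x y)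
        - (b - a) * ∫ y in c..d, pdx (pdy (pdy u)) b y|
      ≤ (b - a) * (√((b - a) * (d - c))
        * √(∫ x in a..b, ∫ y in c..d, pdx (pdx (pdy (pdy u))) x y ^ 2)) := by
  obtain ⟨U, hU, hRU, hu⟩ := hu
  have hA : ContDiffOn ℝ 1 (uncurry (pdx (pdy (pdy u)))) U :=
    ((hu.uncurry_pdy hU).uncurry_pdy hU).uncurry_pdx hU
  have hQ : ContinuousOn (uncurry (pdx (pdx (pdy (pdy u))))) (Icc a b ×ˢ Icc c d) :=
    (hA.uncurry_pdx hU).continuousOn.mono hRU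
  have hQabs : ContinuousOn (uncurry fun x y => |pdx (pdx (pdy (pdy u))) x y|)
      (Icc a b ×ˢ Icc c d) := hQ.abs
  have key := abs_intervalIntegral_intervalIntegral_sub_le hcd hab
    (hA.continuousOn.mono hRU).uncurry_flip hQ.uncurry_flip
    (fun y hy x hx => hasDerivAt_pdx (hA.differentiableAt_of_isOpen hU one_ne_zero (hRU ⟨hx, hy⟩)))
    ⟨hab, le_rfl⟩
  dsimp only [flip] at key
  rw [intervalIntegral_intervalIntegral_swap_of_continuousOn hab hcd (hA.continuousOn.mono hRU)]
  refine key.trans (mul_le_mul_of_nonneg_left ?_ (sub_nonneg.2 hab))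
  rw [← intervalIntegral_intervalIntegral_swap_of_continuousOn hab hcd hQabs]
  exact intervalIntegral_intervalIntegral_abs_le_sqrt hab hcd hQ

theorem abs_integral_pdx_pdx_pdy_sub_le (hu : C4Near u a b c d) (hab : a ≤ b) (hcd : c ≤ d) :
    |(∫ x in a..b, ∫ y in c..d, pdx (pdx (pdy u)) x y)
        - (d - c) * ∫ x in a..b, pdx (pdx (pdy u)) x c|
      ≤ (d - c) * (√((b - a) * (d - c))
        * √(∫ x in a..b, ∫ y in c..d, pdx (pdx (pdy (pdy u))) x y ^ 2)) := by
  obtain ⟨U, hU, hRU, hu⟩ := hu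
  have hD : ContDiffOn ℝ 1 (uncurry (pdx (pdx (pdy u)))) U :=
    ((hu.uncurry_pdy hU).uncurry_pdx hU).uncurry_pdx hU
  have hQ : ContinuousOn (uncurry (pdx (pdx (pdy (pdy u))))) (Icc a b ×ˢ Icc c d) :=
    ((((hu.uncurry_pdy hU).uncurry_pdy hU).uncurry_pdx hU).uncurry_pdx hU).continuousOn.mono hRU
  refine (abs_intervalIntegral_intervalIntegral_sub_le hab hcd (hD.continuousOn.mono hRU) hQ
    (fun x hx y hy => ?_) ⟨le_rfl, hcd⟩).trans
    (mul_le_mul_of_nonneg_left (intervalIntegral_intervalIntegral_abs_le_sqrt hab hcd hQ)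
      (sub_nonneg.2 hcd))
  have hxy : (x, y) ∈ U := hRU ⟨hx, hy⟩
  rw [← pdy_pdx_pdx_pdy_eq hu hU hxy]
  exact hasDerivAt_pdy (hD.differentiableAt_of_isOpen hU one_ne_zero hxy)

theorem sqrt_integral_sq_pdx_pdx_pdy_pdy_le_semiH4R (hu : C4Near u a b c d) (hab : a ≤ b)
    (hcd : c ≤ d) :
    √(∫ x in a..b, ∫ y in c..d, pdx (pdx (pdy (pdy u))) x y ^ 2) ≤ semiH4R u a b c d := by
  obtain ⟨U, hU, hRU, hu⟩ := hu
  have hcont {f : ℝ → ℝ → ℝ} {n : ℕ} (hf : ContDiffOn ℝ n (uncurry f) U) :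
      ContinuousOn (uncurry f) (Icc a b ×ˢ Icc c d) :=
    hf.continuousOn.mono hRU
  have hux := hu.uncurry_pdx hU
  have huy := hu.uncurry_pdy hU
  have huxy := huy.uncurry_pdx hU
  have huyy := huy.uncurry_pdy hU
  have hxxxx := hcont (((hux.uncurry_pdx hU).uncurry_pdx hU).uncurry_pdx hU)
  have hxxxy := hcont ((huxy.uncurry_pdx hU).uncurry_pdx hU)
  have hxxyy := hcont ((huyy.uncurry_pdx hU).uncurry_pdx hU)
  have hxyyy := hcont ((huyy.uncurry_pdy hU).uncurry_pdx hU)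
  have hyyyy := hcont ((huyy.uncurry_pdy hU).uncurry_pdy hU)
  refine Real.sqrt_le_sqrt (intervalIntegral_intervalIntegral_mono hab hcd
    (by fun_prop) (by fun_prop) fun x _ y _ => ?_)
  nlinarith [sq_nonneg (pdx (pdx (pdx (pdx u))) x y), sq_nonneg (pdx (pdx (pdx (pdy u))) x y),
    sq_nonneg (pdx (pdx (pdy (pdy u))) x y), sq_nonneg (pdx (pdy (pdy (pdy u))) x y),
    sq_nonneg (pdy (pdy (pdy (pdy u))) x y)]

end FourthOrderPartials

theorem MorleyShape2.exists_const_third_partials {v : ℝ → ℝ → ℝ} (hv : MorleyShape2 v) :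
    ∃ α β : ℝ, (∀ x y, pdx (pdx (pdx v)) x y = α) ∧ (∀ x y, pdy (pdy (pdy v)) x y = β) ∧
      |α| ≤ semiH2R v (-1) 1 (-1) 1 ∧ |β| ≤ semiH2R v (-1) 1 (-1) 1 := by
  obtain ⟨c0, c1, c2, c3, c4, c5, c6, c7, hv⟩ := hv
  replace hv := funext₂ hv
  obtain ⟨hxx, hxy, hyx, hyy⟩ : (pdx (pdx v) = fun x _ => 2 * c3 + 6 * c6 * x)
      ∧ (pdx (pdy v) = fun _ _ => c4) ∧ (pdy (pdx v) = fun _ _ => c4)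
      ∧ (pdy (pdy v) = fun _ y => 2 * c5 + 6 * c7 * y) := by
    refine ⟨?_, ?_, ?_, ?_⟩ <;> ext x y <;>
    simp (disch := fun_prop) only [hv, pdx, pdy, deriv_fun_add, deriv_const', deriv_const_mul_id',
      deriv_fun_mul, deriv_fun_pow, deriv_id'', Nat.cast_ofNat, Nat.add_one_sub_one, pow_one,
      zero_add, zero_mul, mul_zero, add_zero, mul_one, one_mul] <;>
    ring
  have hlin (c : ℝ) : ∫ x in (-1 : ℝ)..1, c * x = 0 := by
    rw [intervalIntegral.integral_const_mul]
    simp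
  have hS2 : semiH2R v (-1) 1 (-1) 1
      = √(16 * c3 ^ 2 + 8 * c4 ^ 2 + 16 * c5 ^ 2 + 48 * c6 ^ 2 + 48 * c7 ^ 2) := by
    simp only [semiH2R, hxx, hxy, hyx, hyy]
    congr 1
    simp (disch := (apply Continuous.intervalIntegrable; fun_prop)) only [add_sq, mul_pow,
      intervalIntegral.integral_add, intervalIntegral.integral_const_mul, integral_pow, hlin,
      intervalIntegral.integral_const, smul_eq_mul]
    norm_num
    ring
  refine ⟨6 * c6, 6 * c7, fun x y => ?_, fun x y => ?_, ?_, ?_⟩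
  · rw [hxx]
    simp [pdx]
  · rw [hyy]
    simp [pdy]
  all_goals
    rw [hS2, ← Real.sqrt_sq_eq_abs]
    refine Real.sqrt_le_sqrt ?_
    nlinarith [sq_nonneg c3, sq_nonneg c4, sq_nonneg c5, sq_nonneg c6, sq_nonneg c7]

theorem B2_eq_of_const_third_partials {u v : ℝ → ℝ → ℝ} {α β : ℝ}
    (hα : ∀ x y, pdx (pdx (pdx v)) x y = α) (hβ : ∀ x y, pdy (pdy (pdy v)) x y = β) :
    B2 u v = α / 3 * ((∫ x in (-1 : ℝ)..1, ∫ y in (-1 : ℝ)..1, pdx (pdy (pdy u)) x y)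
        - 2 * ∫ y in (-1 : ℝ)..1, pdx (pdy (pdy u)) 1 y)
      + β / 3 * ((∫ x in (-1 : ℝ)..1, ∫ y in (-1 : ℝ)..1, pdx (pdx (pdy u)) x y)
        - 2 * ∫ x in (-1 : ℝ)..1, pdx (pdx (pdy u)) x (-1)) := by
  simp only [B2, hα, hβ, intervalIntegral.integral_mul_const, intervalIntegral.integral_const,
    smul_eq_mul]
  ring

/-- Continuity bound for the functional `B₂` on the reference square. -/
theorem stmt_10 :
    ∃ C > (0:ℝ), ∀ u v : ℝ → ℝ → ℝ, C4Near u (-1) 1 (-1) 1 → MorleyShape2 v →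
      |B2 u v| ≤ C * semiH4R u (-1) 1 (-1) 1 * semiH2R v (-1) 1 (-1) 1 := by
  refine ⟨8 / 3, by norm_num, fun u v hu hv => ?_⟩
  obtain ⟨α, β, hα, hβ, hαv, hβv⟩ := hv.exists_const_third_partials
  have hA := abs_integral_pdx_pdy_pdy_sub_le hu (by norm_num) (by norm_num)
  have hD := abs_integral_pdx_pdx_pdy_sub_le hu (by norm_num) (by norm_num)
  have hJ := sqrt_integral_sq_pdx_pdx_pdy_pdy_le_semiH4R hu (by norm_num) (by norm_num)
  norm_num at hA hD
  rw [B2_eq_of_const_third_partials hα hβ]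
  have hS2 : 0 ≤ semiH2R v (-1) 1 (-1) 1 := (abs_nonneg α).trans hαv
  have hA' := mul_le_mul hαv (hA.trans (c := 4 * semiH4R u (-1) 1 (-1) 1) (by linarith))
    (abs_nonneg _) hS2
  have hD' := mul_le_mul hβv (hD.trans (c := 4 * semiH4R u (-1) 1 (-1) 1) (by linarith))
    (abs_nonneg _) hS2
  refine (abs_add_le _ _).trans ?_
  simp only [abs_mul, abs_div, abs_of_pos (three_pos : (0 : ℝ) < 3)]
  linarith
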